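/- arXiv:2501.01663 — 4 statements merged into one kernel-verified Lean document; each statement's English description precedes it below -/
import Mathlib

section
/- Let M > 0, α ∈ (0,1], and n ≥ 2. The function f(z) = z + ((M-α+1)/(n + α n(n-2))) · conj(z)^n belongs to the class P_H^0(α, M), i.e., with h(z) = z and g(z) = ((M-α+1)/(n + α n(n-2))) z^n, one has Re((1-α)h'(z) + α z h''(z)) > -M + |(1-α)g'(z) + α z g''(z)| for all z in the unit disk. -/
open Metric Complex

theorem stmt_1 (M α : ℝ) (hM : 0 < M) (hα0 : 0 < α) (hα1 : α ≤ 1)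
    (n : ℕ) (hn : 2 ≤ n)
    (h g : ℂ → ℂ)
    (hh : h = fun z : ℂ => z)
    (hg : g = fun z : ℂ =>
      (((M - α + 1) / ((n : ℝ) + α * n * ((n : ℝ) - 2)) : ℝ) : ℂ) * z ^ n) :
    ∀ z ∈ ball (0:ℂ) 1,
      ((1 - α) * deriv h z + α * z * deriv (deriv h) z).re >
        -M + ‖(1 - α) * deriv g z + α * z * deriv (deriv g) z‖ := by
  obtain ⟨m, rfl⟩ : ∃ m, n = m + 2 := ⟨n - 2, by omega⟩
  subst hh hg
  intro z hz
  rw [mem_ball, dist_zero_right] at hz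
  set c : ℝ := (M - α + 1) / (((m + 2 : ℕ) : ℝ) + α * (m + 2 : ℕ) * (((m + 2 : ℕ) : ℝ) - 2))
    with hc
  have hd1 : deriv (fun z : ℂ => z) = fun _ => 1 := by
    funext w; simp
  have hd2 : deriv (deriv (fun z : ℂ => z)) = fun _ => 0 := by
    rw [hd1]; funext w; simp
  have hg1 : deriv (fun z : ℂ => (c : ℂ) * z ^ (m + 2)) =
      fun w => (c : ℂ) * ((m + 2) * w ^ (m + 1)) := by
    funext w
    rw [deriv_const_mul _ (differentiable_pow (m + 2)).differentiableAt]
    simp [deriv_pow]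
  have hg2 : deriv (deriv (fun z : ℂ => (c : ℂ) * z ^ (m + 2))) =
      fun w => (c : ℂ) * ((m + 2) * ((m + 1) * w ^ m)) := by
    rw [hg1]; funext w
    have hdiff : DifferentiableAt ℂ (fun w : ℂ => ((m : ℂ) + 2) * w ^ (m + 1)) w :=
      (differentiableAt_const _).mul (differentiable_pow (m + 1)).differentiableAt
    rw [deriv_const_mul _ hdiff, deriv_const_mul _ (differentiable_pow (m + 1)).differentiableAt]
    simp only [deriv_pow_field]
    push_cast
    ring
  rw [hd2, hd1, hg2, hg1]
  have hden : (0 : ℝ) < ((m + 2 : ℕ) : ℝ) + α * (m + 2 : ℕ) * (((m + 2 : ℕ) : ℝ) - 2) := by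
    push_cast
    have : (m : ℝ) + 2 + α * ((m : ℝ) + 2) * ((m : ℝ) + 2 - 2)
        = (m : ℝ) + 2 + α * (((m : ℝ) + 2) * m) := by ring
    rw [this]
    positivity
  have hnum : (0 : ℝ) < M - α + 1 := by linarith
  have hkey : (c : ℝ) * ((m + 2) * (1 + α * m)) = M - α + 1 := by
    have hD : ((m + 2 : ℕ) : ℝ) + α * (m + 2 : ℕ) * (((m + 2 : ℕ) : ℝ) - 2)
        = ((m : ℝ) + 2) * (1 + α * m) := by push_cast; ring
    rw [hc, hD]
    exact div_mul_cancel₀ _ (by rw [← hD]; exact hden.ne')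
  have hE : (1 - α : ℂ) * ((c : ℂ) * ((m + 2) * z ^ (m + 1))) +
      (α : ℂ) * z * ((c : ℂ) * ((m + 2) * ((m + 1) * z ^ m))) =
      ((M - α + 1 : ℝ) : ℂ) * z ^ (m + 1) := by
    have : ((c : ℝ) * ((m + 2) * (1 + α * m)) : ℂ) = ((M - α + 1 : ℝ) : ℂ) := by
      exact_mod_cast congrArg (Complex.ofReal) hkey
    push_cast at this ⊢
    rw [← this]
    ring
  rw [hE]
  rw [norm_mul, Complex.norm_real, norm_pow, Real.norm_eq_abs, abs_of_pos hnum]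
  have hpow : ‖z‖ ^ (m + 1) < 1 :=
    pow_lt_one₀ (norm_nonneg z) hz (by omega)
  have : (M - α + 1) * ‖z‖ ^ (m + 1) < (M - α + 1) * 1 :=
    mul_lt_mul_of_pos_left hpow hnum
  simp only [mul_one, Complex.add_re, Complex.mul_re, Complex.one_re, Complex.ofReal_re]
  simp
  nlinarith
end

section
/- Let M > 0 and α ∈ (0,1] with M - α + 1 ≤ 3(1+α)/(6α+4). Define the sequence c_0 = 1 and c_{n-1} = 2(M-α+1)/(n + α n(n-2)) for n ≥ 2. Then {c_n} is a convex null sequence, i.e., c_n → 0 as n → ∞ and c_0 - c_1 ≥ c_1 - c_2 ≥ ⋯ ≥ c_{n-1} - c_n ≥ ⋯ ≥ 0. -/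
open Filter

theorem stmt_4 (M α : ℝ) (hM : 0 < M) (hα0 : 0 < α) (hα1 : α ≤ 1)
    (hMα : M - α + 1 ≤ 3 * (1 + α) / (6 * α + 4))
    (c : ℕ → ℝ) (hc0 : c 0 = 1)
    (hc : ∀ n : ℕ, 2 ≤ n →
      c (n - 1) = 2 * (M - α + 1) / ((n : ℝ) + α * n * ((n : ℝ) - 2))) :
    Tendsto c atTop (nhds 0) ∧
    (∀ n : ℕ, c n - c (n + 1) ≥ c (n + 1) - c (n + 2)) ∧
    (∀ n : ℕ, 0 ≤ c n - c (n + 1)) := by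
  set K := M - α + 1 with hK
  have hKpos : 0 < K := by simp only [hK]; linarith
  have h64 : (0:ℝ) < 6 * α + 4 := by linarith
  have hK' : K * (6 * α + 4) ≤ 3 * (1 + α) := (le_div_iff₀ h64).mp hMα
  have hK1 : K < 1 := by nlinarith
  have hdpos : ∀ m : ℕ, 1 ≤ m → (0:ℝ) < α * m ^ 2 + m + (1 - α) := by
    intro m hm
    have hm' : (1:ℝ) ≤ m := by exact_mod_cast hm
    nlinarith
  have hcm : ∀ m : ℕ, 1 ≤ m → c m = 2 * K / (α * m ^ 2 + m + (1 - α)) := by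
    intro m hm
    have h := hc (m + 1) (by omega)
    simp only [Nat.add_sub_cancel] at h
    rw [h]
    congr 1
    push_cast
    ring
  have hc1 : c 1 = K := by
    rw [hcm 1 le_rfl]
    push_cast
    rw [show α * (1:ℝ) ^ 2 + 1 + (1 - α) = 2 by ring]
    ring
  have hc2 : c 2 = 2 * K / (3 * α + 3) := by
    rw [hcm 2 (by norm_num)]
    norm_num
    ring_nf
  -- monotonicity for m ≥ 1
  have hmono : ∀ m : ℕ, 1 ≤ m → 0 ≤ c m - c (m + 1) := by
    intro m hm
    have ha := hdpos m hm
    have hb := hdpos (m + 1) (by omega)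
    rw [hcm m hm, hcm (m + 1) (by omega), sub_nonneg]
    apply div_le_div_of_nonneg_left (by linarith) ha
    push_cast
    nlinarith [hα0.le]
  -- convexity for m ≥ 1
  have hconv : ∀ m : ℕ, 1 ≤ m → c m - c (m + 1) ≥ c (m + 1) - c (m + 2) := by
    intro m hm
    have hm' : (1:ℝ) ≤ m := by exact_mod_cast hm
    set x : ℝ := (m : ℝ) with hx
    have ha := hdpos m hm
    have hb := hdpos (m + 1) (by omega)
    have hcc := hdpos (m + 2) (by omega)
    rw [hcm m hm, hcm (m + 1) (by omega), hcm (m + 2) (by omega)]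
    push_cast at ha hb hcc ⊢
    set A : ℝ := α * x ^ 2 + x + (1 - α) with hA
    set B : ℝ := α * (x + 1) ^ 2 + (x + 1) + (1 - α) with hB
    set C : ℝ := α * (x + 2) ^ 2 + (x + 2) + (1 - α) with hC
    have key : 2 * (A * C) ≤ A * B + B * C := by
      have : A * B + B * C - 2 * (A * C)
          = 2 * (3 * α ^ 2 * (x + 1) ^ 2 + α * (3 * x + 2) + 1) := by
        simp only [hA, hB, hC]; ring
      nlinarith [sq_nonneg (x + 1), mul_pos hα0 hα0]
    rw [ge_iff_le, div_sub_div _ _ hb.ne' hcc.ne', div_sub_div _ _ ha.ne' hb.ne',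
      div_le_div_iff₀ (by positivity) (by positivity)]
    nlinarith [mul_le_mul_of_nonneg_left key (by positivity : (0:ℝ) ≤ 2 * K * B)]
  refine ⟨?_, ?_, ?_⟩
  · -- tendsto
    have hub : ∀ m : ℕ, 1 ≤ m → c m ≤ 2 * K / m := by
      intro m hm
      have hm' : (1:ℝ) ≤ m := by exact_mod_cast hm
      rw [hcm m hm]
      apply div_le_div_of_nonneg_left (by linarith) (by linarith : (0:ℝ) < m)
      nlinarith
    have hlb : ∀ m : ℕ, 1 ≤ m → 0 ≤ c m := by
      intro m hm
      have hm' : (1:ℝ) ≤ m := by exact_mod_cast hm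
      rw [hcm m hm]
      exact div_nonneg (by linarith) (hdpos m hm).le
    have h1 : Tendsto (fun m : ℕ => 2 * K / (m : ℝ)) atTop (nhds 0) :=
      tendsto_const_div_atTop_nhds_zero_nat (2 * K)
    apply tendsto_of_tendsto_of_tendsto_of_le_of_le' tendsto_const_nhds h1
    · filter_upwards [eventually_ge_atTop 1] with m hm using hlb m hm
    · filter_upwards [eventually_ge_atTop 1] with m hm using hub m hm
  · -- convexity
    intro n
    match n with
    | 0 =>
      have h3 : (0:ℝ) < 3 * α + 3 := by linarith
      have ht : 2 * K / (3 * α + 3) * (3 * α + 3) = 2 * K :=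
        div_mul_cancel₀ _ h3.ne'
      simp only [hc0, hc1, hc2]
      nlinarith [ht]
    | (m + 1) => exact hconv (m + 1) (by omega)
  · -- nonnegativity of differences
    intro n
    match n with
    | 0 =>
      simp only [hc0, hc1]
      linarith
    | (m + 1) => exact hmono (m + 1) (by omega)
end

section
/- Let M > 0 and α ∈ (0,1]. Suppose f = h + conj(g) is harmonic on the unit disk with h(z) = z + Σ_{n≥2} a_n z^n and g(z) = Σ_{n≥2} b_n z^n analytic on the unit disk. If Σ_{n≥2} (n + α n(n-2)) (|a_n| + |b_n|) < M - α + 1, then f belongs to P_H^0(α, M), i.e., Re((1-α)h'(z) + α z h''(z)) > -M + |(1-α)g'(z) + α z g''(z)| for all z in the unit disk. -/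
set_option maxHeartbeats 1000000


open Metric Complex

private lemma bnd1 (c : ℂ) (n : ℕ) {y : ℂ} (hy : ‖y‖ ≤ 1) :
    ‖c * (↑n * y ^ (n - 1))‖ ≤ (n : ℝ) * ‖c‖ := by
  have h1 : ‖y ^ (n - 1)‖ ≤ 1 := by
    rw [norm_pow]; exact pow_le_one₀ (norm_nonneg y) hy
  calc ‖c * (↑n * y ^ (n - 1))‖
      = ‖c‖ * ((n : ℝ) * ‖y ^ (n - 1)‖) := by
        simp [norm_mul, Complex.norm_natCast]
    _ ≤ ‖c‖ * ((n : ℝ) * 1) := by gcongr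
    _ = (n : ℝ) * ‖c‖ := by ring

private lemma bnd2 (c : ℂ) (n : ℕ) {y : ℂ} (hy : ‖y‖ ≤ 1) :
    ‖c * (↑n * (↑(n - 1) * y ^ (n - 1 - 1)))‖ ≤
      (n : ℝ) * ((n - 1 : ℕ) : ℝ) * ‖c‖ := by
  have h1 : ‖y ^ (n - 1 - 1)‖ ≤ 1 := by
    rw [norm_pow]; exact pow_le_one₀ (norm_nonneg y) hy
  calc ‖c * (↑n * (↑(n - 1) * y ^ (n - 1 - 1)))‖
      = ‖c‖ * ((n : ℝ) * (((n - 1 : ℕ) : ℝ) * ‖y ^ (n - 1 - 1)‖)) := by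
        simp [norm_mul, Complex.norm_natCast]
    _ ≤ ‖c‖ * ((n : ℝ) * (((n - 1 : ℕ) : ℝ) * 1)) := by gcongr
    _ = (n : ℝ) * ((n - 1 : ℕ) : ℝ) * ‖c‖ := by ring

private lemma hasDerivAt_tsum_unitBall (g g' : ℕ → ℂ → ℂ) (u : ℕ → ℝ) (hu : Summable u)
    (hg : ∀ n (y : ℂ), HasDerivAt (g n) (g' n y) y)
    (hg' : ∀ n (y : ℂ), ‖y‖ ≤ 1 → ‖g' n y‖ ≤ u n)
    (hg0 : Summable fun n => g n 0)
    {z : ℂ} (hz : ‖z‖ < 1) :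
    HasDerivAt (fun w => ∑' n, g n w) (∑' n, g' n z) z := by
  set r : ℝ := (‖z‖ + 1) / 2 with hr
  have h0 : 0 ≤ ‖z‖ := norm_nonneg z
  have hr1 : r < 1 := by rw [hr]; linarith
  have hzr : ‖z‖ < r := by rw [hr]; linarith
  have hr0 : 0 < r := by rw [hr]; linarith
  refine hasDerivAt_tsum_of_isPreconnected hu isOpen_ball
    (convex_ball (0 : ℂ) r).isPreconnected
    (fun n y _ => hg n y) (fun n y hy => ?_) ?_ hg0 ?_
  · have : ‖y‖ < r := by
      simpa using mem_ball_zero_iff.1 hy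
    exact hg' n y (le_of_lt (lt_trans this hr1))
  · exact mem_ball_zero_iff.2 (by simpa using hr0)
  · exact mem_ball_zero_iff.2 (by simpa using hzr)

private lemma pack (α : ℝ) (hα0 : 0 < α) (hα1 : α ≤ 1) (c : ℕ → ℂ) (hc0 : c 0 = 0)
    (S1 : Summable fun n : ℕ => (n : ℝ) * ‖c n‖)
    (S2 : Summable fun n : ℕ => (n : ℝ) * ((n - 1 : ℕ) : ℝ) * ‖c n‖)
    (Sd : Summable (fun n : ℕ => (((n + 2 : ℕ) : ℝ) + α * (n + 2 : ℕ) * n) *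
      ‖c (n + 2)‖))
    (f : ℂ → ℂ) (hf : ∀ z ∈ ball (0 : ℂ) 1, f z = ∑' n : ℕ, c n * z ^ n)
    {z : ℂ} (hz : z ∈ ball (0 : ℂ) 1) :
    ∃ w : ℂ,
      (1 - (α : ℂ)) * deriv f z + (α : ℂ) * z * deriv (deriv f) z = (1 - (α : ℂ)) * c 1 + w ∧
      ‖w‖ ≤ ∑' n : ℕ, (((n + 2 : ℕ) : ℝ) + α * (n + 2 : ℕ) * n) *
        ‖c (n + 2)‖ := by
  have hz1 : ‖z‖ < 1 := by
    simpa using mem_ball_zero_iff.1 hz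
  have hzle : ‖z‖ ≤ 1 := hz1.le
  -- first derivative
  have sum0 : Summable fun n : ℕ => c n * (0 : ℂ) ^ n := by
    apply summable_of_ne_finset_zero (s := {0})
    intro n hn
    simp at hn
    simp [zero_pow hn]
  have step1 : ∀ y : ℂ, ‖y‖ < 1 →
      HasDerivAt (fun w => ∑' n : ℕ, c n * w ^ n)
        (∑' n : ℕ, c n * (↑n * y ^ (n - 1))) y := by
    intro y hy
    exact hasDerivAt_tsum_unitBall (fun n w => c n * w ^ n)
      (fun n w => c n * (↑n * w ^ (n - 1))) (fun n : ℕ => (n : ℝ) * ‖c n‖) S1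
      (fun n y => (hasDerivAt_pow n y).const_mul (c n))
      (fun n y hy1 => bnd1 (c n) n hy1) sum0 hy
  have hD1 : ∀ y ∈ ball (0 : ℂ) 1, deriv f y = ∑' n : ℕ, c n * (↑n * y ^ (n - 1)) := by
    intro y hy
    have hyy : ‖y‖ < 1 := by
      simpa using mem_ball_zero_iff.1 hy
    have he : f =ᶠ[nhds y] (fun w => ∑' n : ℕ, c n * w ^ n) :=
      (isOpen_ball.eventually_mem hy).mono (fun w hw => hf w hw)
    rw [he.deriv_eq, (step1 y hyy).deriv]
  -- second derivative
  have sum0' : Summable fun n : ℕ => c n * (↑n * (0 : ℂ) ^ (n - 1)) := by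
    apply summable_of_ne_finset_zero (s := {0, 1})
    intro n hn
    simp at hn
    have : n - 1 ≠ 0 := by omega
    simp [zero_pow this]
  have step2 : HasDerivAt (fun w => ∑' n : ℕ, c n * (↑n * w ^ (n - 1)))
      (∑' n : ℕ, c n * (↑n * (↑(n - 1) * z ^ (n - 1 - 1)))) z := by
    exact hasDerivAt_tsum_unitBall (fun n w => c n * (↑n * w ^ (n - 1)))
      (fun n w => c n * (↑n * (↑(n - 1) * w ^ (n - 1 - 1))))
      (fun n : ℕ => (n : ℝ) * ((n - 1 : ℕ) : ℝ) * ‖c n‖) S2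
      (fun n y => ((hasDerivAt_pow (n - 1) y).const_mul ((n : ℕ) : ℂ)).const_mul (c n))
      (fun n y hy1 => bnd2 (c n) n hy1) sum0' hz1
  have hD2 : deriv (deriv f) z = ∑' n : ℕ, c n * (↑n * (↑(n - 1) * z ^ (n - 1 - 1))) := by
    have he : deriv f =ᶠ[nhds z] (fun w => ∑' n : ℕ, c n * (↑n * w ^ (n - 1))) :=
      (isOpen_ball.eventually_mem hz).mono hD1
    rw [he.deriv_eq, step2.deriv]
  -- summabilities at z
  have h1 : Summable fun n : ℕ => c n * (↑n * z ^ (n - 1)) := by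
    apply Summable.of_norm
    refine Summable.of_nonneg_of_le (fun n => norm_nonneg _) (fun n => ?_) S1
    simpa using bnd1 (c n) n hzle
  have h2 : Summable fun n : ℕ => c n * (↑n * (↑(n - 1) * z ^ (n - 1 - 1))) := by
    apply Summable.of_norm
    refine Summable.of_nonneg_of_le (fun n => norm_nonneg _) (fun n => ?_) S2
    simpa using bnd2 (c n) n hzle
  set T : ℕ → ℂ := fun n => (1 - (α : ℂ)) * (c n * (↑n * z ^ (n - 1))) +
      ((α : ℂ) * z) * (c n * (↑n * (↑(n - 1) * z ^ (n - 1 - 1)))) with hT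
  have St : Summable T := (h1.mul_left _).add (h2.mul_left _)
  have keyeq : (1 - (α : ℂ)) * deriv f z + (α : ℂ) * z * deriv (deriv f) z = ∑' n, T n := by
    rw [hD1 z hz, hD2, ← tsum_mul_left, ← tsum_mul_left,
      ← Summable.tsum_add (h1.mul_left (1 - (α : ℂ))) (h2.mul_left ((α : ℂ) * z))]
  have St1 : Summable fun n => T (n + 1) := (summable_nat_add_iff 1).2 St
  have split : ∑' n, T n = (1 - (α : ℂ)) * c 1 + ∑' n : ℕ, T (n + 2) := by
    rw [Summable.tsum_eq_zero_add St, Summable.tsum_eq_zero_add St1]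
    have hT0 : T 0 = 0 := by simp [hT, hc0]
    have hT1 : T (0 + 1) = (1 - (α : ℂ)) * c 1 := by norm_num [hT]
    have hsh : (fun n : ℕ => T (n + 1 + 1)) = fun n : ℕ => T (n + 2) := by
      funext n; congr 1
    rw [hT0, hT1, hsh, zero_add]
  refine ⟨∑' n : ℕ, T (n + 2), by rw [keyeq, split], ?_⟩
  -- bound the tail
  have perterm : ∀ n : ℕ, ‖T (n + 2)‖ ≤
      (((n + 2 : ℕ) : ℝ) + α * (n + 2 : ℕ) * n) * ‖c (n + 2)‖ := by
    intro n
    have e1 : ‖1 - (α : ℂ)‖ = 1 - α := by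
      rw [show (1 : ℂ) - (α : ℂ) = ((1 - α : ℝ) : ℂ) by push_cast; ring,
        Complex.norm_real, Real.norm_eq_abs, _root_.abs_of_nonneg (by linarith)]
    have e2 : ‖(α : ℂ) * z‖ ≤ α := by
      rw [norm_mul, Complex.norm_real, Real.norm_eq_abs, _root_.abs_of_nonneg hα0.le]
      calc α * ‖z‖ ≤ α * 1 := by
            exact mul_le_mul_of_nonneg_left hzle hα0.le
        _ = α := mul_one α
    have b1 := bnd1 (c (n + 2)) (n + 2) hzle
    have b2 := bnd2 (c (n + 2)) (n + 2) hzle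
    have hA : 0 ≤ ‖c (n + 2)‖ := norm_nonneg _
    calc ‖T (n + 2)‖
        ≤ ‖(1 - (α : ℂ)) * (c (n + 2) * (↑(n + 2) * z ^ (n + 2 - 1)))‖ +
          ‖((α : ℂ) * z) *
            (c (n + 2) * (↑(n + 2) * (↑(n + 2 - 1) * z ^ (n + 2 - 1 - 1))))‖ :=
          norm_add_le _ _
      _ ≤ (1 - α) * (((n + 2 : ℕ) : ℝ) * ‖c (n + 2)‖) +
          α * (((n + 2 : ℕ) : ℝ) * (((n + 2 - 1 : ℕ)) : ℝ) * ‖c (n + 2)‖) := by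
          have B1 : ‖(1 - (α : ℂ)) * (c (n + 2) * (↑(n + 2) * z ^ (n + 2 - 1)))‖ ≤
              (1 - α) * (((n + 2 : ℕ) : ℝ) * ‖c (n + 2)‖) := by
            rw [norm_mul, e1]
            exact mul_le_mul_of_nonneg_left b1 (by linarith)
          have B2 : ‖((α : ℂ) * z) *
              (c (n + 2) * (↑(n + 2) * (↑(n + 2 - 1) * z ^ (n + 2 - 1 - 1))))‖ ≤
              α * (((n + 2 : ℕ) : ℝ) * (((n + 2 - 1 : ℕ)) : ℝ) * ‖c (n + 2)‖) := by
            rw [norm_mul]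
            exact mul_le_mul e2 b2 (norm_nonneg _) hα0.le
          exact add_le_add B1 B2
      _ = (((n + 2 : ℕ) : ℝ) + α * (n + 2 : ℕ) * n) * ‖c (n + 2)‖ := by
          have : (n + 2 - 1 : ℕ) = n + 1 := by omega
          rw [this]
          push_cast
          ring
  have Stail : Summable fun n : ℕ => T (n + 2) := (summable_nat_add_iff 2).2 St
  have final := tsum_of_norm_bounded (f := fun n : ℕ => T (n + 2)) Sd.hasSum
    (fun n => by simpa using perterm n)
  simpa using final

theorem stmt_7 (M α : ℝ) (hM : 0 < M) (hα0 : 0 < α) (hα1 : α ≤ 1)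
    (h g : ℂ → ℂ) (a b : ℕ → ℂ)
    (ha0 : a 0 = 0) (ha1 : a 1 = 1) (hb0 : b 0 = 0) (hb1 : b 1 = 0)
    (hh : DifferentiableOn ℂ h (ball 0 1))
    (hg : DifferentiableOn ℂ g (ball 0 1))
    (hhser : ∀ z ∈ ball (0:ℂ) 1, h z = ∑' n : ℕ, a n * z ^ n)
    (hgser : ∀ z ∈ ball (0:ℂ) 1, g z = ∑' n : ℕ, b n * z ^ n)
    (hsum : Summable (fun n : ℕ => (((n + 2 : ℕ) : ℝ) + α * (n + 2 : ℕ) * n) *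
      (‖a (n + 2)‖ + ‖b (n + 2)‖)))
    (hlt : ∑' n : ℕ, (((n + 2 : ℕ) : ℝ) + α * (n + 2 : ℕ) * n) *
      (‖a (n + 2)‖ + ‖b (n + 2)‖) < M - α + 1) :
    ∀ z ∈ ball (0:ℂ) 1,
      ((1 - α) * deriv h z + α * z * deriv (deriv h) z).re >
        -M + ‖(1 - α) * deriv g z + α * z * deriv (deriv g) z‖ := by
  intro z hz
  set d : ℕ → ℝ := fun n => ((n + 2 : ℕ) : ℝ) + α * (n + 2 : ℕ) * n with hd
  have hd_nonneg : ∀ n, 0 ≤ d n := by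
    intro n
    have : (0 : ℝ) ≤ α * (n + 2 : ℕ) * n := by positivity
    have h2 : (0 : ℝ) ≤ ((n + 2 : ℕ) : ℝ) := by positivity
    simp only [hd]; linarith
  have hd_ge : ∀ n, ((n + 2 : ℕ) : ℝ) ≤ d n := by
    intro n
    have : (0 : ℝ) ≤ α * (n + 2 : ℕ) * n := by positivity
    simp only [hd]; linarith
  have habs : ∀ n, 0 ≤ ‖a n‖ + ‖b n‖ :=
    fun n => add_nonneg (norm_nonneg _) (norm_nonneg _)
  -- summabilities for a
  have Sa_d : Summable fun n : ℕ => d n * ‖a (n + 2)‖ := by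
    refine Summable.of_nonneg_of_le
      (fun n => mul_nonneg (hd_nonneg n) (norm_nonneg _)) (fun n => ?_) hsum
    exact mul_le_mul_of_nonneg_left (le_add_of_nonneg_right (norm_nonneg _))
      (hd_nonneg n)
  have Sb_d : Summable fun n : ℕ => d n * ‖b (n + 2)‖ := by
    refine Summable.of_nonneg_of_le
      (fun n => mul_nonneg (hd_nonneg n) (norm_nonneg _)) (fun n => ?_) hsum
    refine mul_le_mul_of_nonneg_left ?_ (hd_nonneg n)
    exact le_add_of_nonneg_left (norm_nonneg _)
  have S1gen : ∀ c : ℕ → ℂ, (Summable fun n : ℕ => d n * ‖c (n + 2)‖) →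
      Summable fun n : ℕ => (n : ℝ) * ‖c n‖ := by
    intro c hc
    rw [← summable_nat_add_iff 2]
    refine Summable.of_nonneg_of_le (fun n => by positivity) (fun n => ?_) hc
    exact mul_le_mul_of_nonneg_right (hd_ge n) (norm_nonneg _)
  have S2gen : ∀ c : ℕ → ℂ, (Summable fun n : ℕ => d n * ‖c (n + 2)‖) →
      Summable fun n : ℕ => (n : ℝ) * ((n - 1 : ℕ) : ℝ) * ‖c n‖ := by
    intro c hc
    rw [← summable_nat_add_iff 2]
    refine Summable.of_nonneg_of_le (fun n => by positivity) (fun n => ?_)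
      (hc.mul_left (1 + 1 / α))
    have hcoef : ((n + 2 : ℕ) : ℝ) * (((n + 2 - 1 : ℕ)) : ℝ) ≤ (1 + 1 / α) * d n := by
      have e : (n + 2 - 1 : ℕ) = n + 1 := by omega
      rw [e, hd]
      have hN : (0 : ℝ) ≤ (n : ℝ) := Nat.cast_nonneg n
      have h1α : 0 < 1 / α := by positivity
      push_cast
      have e1 : (1 + 1 / α) * ((n : ℝ) + 2 + α * ((n : ℝ) + 2) * (n : ℝ)) =
          ((n : ℝ) + 2 + α * ((n : ℝ) + 2) * (n : ℝ)) + (1 / α) * ((n : ℝ) + 2) +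
          ((n : ℝ) + 2) * (n : ℝ) := by
        field_simp
        ring
      rw [e1]
      nlinarith [mul_nonneg (mul_nonneg hα0.le (by linarith : (0:ℝ) ≤ (n:ℝ) + 2)) hN,
        mul_nonneg h1α.le (by linarith : (0:ℝ) ≤ (n:ℝ) + 2)]
    calc ((n + 2 : ℕ) : ℝ) * (((n + 2 - 1 : ℕ)) : ℝ) * ‖c (n + 2)‖
        ≤ (1 + 1 / α) * d n * ‖c (n + 2)‖ :=
          mul_le_mul_of_nonneg_right hcoef (norm_nonneg _)
      _ = (1 + 1 / α) * (d n * ‖c (n + 2)‖) := by ring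
  obtain ⟨wa, hwa, hwa_le⟩ := pack α hα0 hα1 a ha0 (S1gen a Sa_d) (S2gen a Sa_d) Sa_d h hhser hz
  obtain ⟨wb, hwb, hwb_le⟩ := pack α hα0 hα1 b hb0 (S1gen b Sb_d) (S2gen b Sb_d) Sb_d g hgser hz
  rw [hwa, hwb, ha1, hb1, mul_one, mul_zero, zero_add]
  have hre : ((1 - (α : ℂ)) + wa).re = (1 - α) + wa.re := by
    simp [Complex.add_re, Complex.sub_re]
  rw [hre]
  have hwa_re : -(∑' n : ℕ, d n * ‖a (n + 2)‖) ≤ wa.re := by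
    have h1 : -‖wa‖ ≤ wa.re := by
      have := Complex.abs_re_le_norm wa
      have := neg_abs_le wa.re
      linarith [abs_nonneg wa.re]
    linarith [hwa_le]
  have hsplit : (∑' n : ℕ, d n * ‖a (n + 2)‖) +
      (∑' n : ℕ, d n * ‖b (n + 2)‖) =
      ∑' n : ℕ, d n * (‖a (n + 2)‖ + ‖b (n + 2)‖) := by
    rw [← Summable.tsum_add Sa_d Sb_d]
    congr 1
    funext n
    ring
  have hfin : (∑' n : ℕ, d n * ‖a (n + 2)‖) +
      (∑' n : ℕ, d n * ‖b (n + 2)‖) < M - α + 1 := by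
    rw [hsplit]; exact hlt
  linarith [hwb_le, hwa_re]
end

section
/- Let M > 0 and α ∈ (0,1]. The class P_H^0(α, M) is closed under convex combinations: if f_1, …, f_n ∈ P_H^0(α, M) and t_1, …, t_n ∈ [0,1] with Σ t_i = 1, then Σ t_i f_i ∈ P_H^0(α, M). -/
open Metric Complex

/-- Membership in the class `P_H^0(α, M)`: `f = h + conj g` with `h, g` analytic on the
unit disk, normalized, satisfying the defining differential inequality. -/
def PH0 (α M : ℝ) (h g : ℂ → ℂ) : Prop :=
  DifferentiableOn ℂ h (ball 0 1) ∧ DifferentiableOn ℂ g (ball 0 1) ∧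
  h 0 = 0 ∧ g 0 = 0 ∧ deriv h 0 = 1 ∧ deriv g 0 = 0 ∧
  ∀ z ∈ ball (0:ℂ) 1,
    ((1 - α) * deriv h z + α * z * deriv (deriv h) z).re >
      -M + ‖(1 - α) * deriv g z + α * z * deriv (deriv g) z‖

private lemma deriv_csum {n : ℕ} (c : Fin n → ℝ) (f : Fin n → ℂ → ℂ) (z : ℂ)
    (hd : ∀ i, DifferentiableAt ℂ (f i) z) :
    deriv (fun w => ∑ i, (c i : ℂ) * f i w) z = ∑ i, (c i : ℂ) * deriv (f i) z := by
  have : HasDerivAt (fun w => ∑ i, (c i : ℂ) * f i w) (∑ i, (c i : ℂ) * deriv (f i) z) z :=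
    HasDerivAt.fun_sum fun i _ => ((hd i).hasDerivAt).const_mul _
  exact this.deriv

theorem stmt_8 (M α : ℝ) (hM : 0 < M) (hα0 : 0 < α) (hα1 : α ≤ 1)
    (n : ℕ) (h g : Fin n → (ℂ → ℂ)) (t : Fin n → ℝ)
    (ht0 : ∀ i, 0 ≤ t i) (ht1 : ∀ i, t i ≤ 1) (htsum : ∑ i, t i = 1)
    (hf : ∀ i, PH0 α M (h i) (g i)) :
    PH0 α M (fun z => ∑ i, (t i : ℂ) * h i z) (fun z => ∑ i, (t i : ℂ) * g i z) := by
  have hdh : ∀ i, DifferentiableOn ℂ (h i) (ball 0 1) := fun i => (hf i).1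
  have hdg : ∀ i, DifferentiableOn ℂ (g i) (ball 0 1) := fun i => (hf i).2.1
  have hmem0 : (0:ℂ) ∈ ball (0:ℂ) 1 := by simp
  have hAth : ∀ i, ∀ z ∈ ball (0:ℂ) 1, DifferentiableAt ℂ (h i) z :=
    fun i z hz => (hdh i).differentiableAt (isOpen_ball.mem_nhds hz)
  have hAtg : ∀ i, ∀ z ∈ ball (0:ℂ) 1, DifferentiableAt ℂ (g i) z :=
    fun i z hz => (hdg i).differentiableAt (isOpen_ball.mem_nhds hz)
  have hAth' : ∀ i, ∀ z ∈ ball (0:ℂ) 1, DifferentiableAt ℂ (deriv (h i)) z :=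
    fun i z hz => (((hdh i).analyticOnNhd isOpen_ball).deriv z hz).differentiableAt
  have hAtg' : ∀ i, ∀ z ∈ ball (0:ℂ) 1, DifferentiableAt ℂ (deriv (g i)) z :=
    fun i z hz => (((hdg i).analyticOnNhd isOpen_ball).deriv z hz).differentiableAt
  have hDh : ∀ z ∈ ball (0:ℂ) 1,
      deriv (fun w => ∑ i, (t i:ℂ) * h i w) z = ∑ i, (t i:ℂ) * deriv (h i) z :=
    fun z hz => deriv_csum t h z (fun i => hAth i z hz)
  have hDg : ∀ z ∈ ball (0:ℂ) 1,
      deriv (fun w => ∑ i, (t i:ℂ) * g i w) z = ∑ i, (t i:ℂ) * deriv (g i) z :=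
    fun z hz => deriv_csum t g z (fun i => hAtg i z hz)
  have hD2h : ∀ z ∈ ball (0:ℂ) 1,
      deriv (deriv (fun w => ∑ i, (t i:ℂ) * h i w)) z = ∑ i, (t i:ℂ) * deriv (deriv (h i)) z := by
    intro z hz
    have heq : deriv (fun w => ∑ i, (t i:ℂ) * h i w)
        =ᶠ[nhds z] (fun w => ∑ i, (t i:ℂ) * deriv (h i) w) := by
      filter_upwards [isOpen_ball.mem_nhds hz] with w hw
      exact hDh w hw
    rw [heq.deriv_eq]
    exact deriv_csum t (fun i => deriv (h i)) z (fun i => hAth' i z hz)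
  have hD2g : ∀ z ∈ ball (0:ℂ) 1,
      deriv (deriv (fun w => ∑ i, (t i:ℂ) * g i w)) z = ∑ i, (t i:ℂ) * deriv (deriv (g i)) z := by
    intro z hz
    have heq : deriv (fun w => ∑ i, (t i:ℂ) * g i w)
        =ᶠ[nhds z] (fun w => ∑ i, (t i:ℂ) * deriv (g i) w) := by
      filter_upwards [isOpen_ball.mem_nhds hz] with w hw
      exact hDg w hw
    rw [heq.deriv_eq]
    exact deriv_csum t (fun i => deriv (g i)) z (fun i => hAtg' i z hz)
  refine ⟨?_, ?_, ?_, ?_, ?_, ?_, ?_⟩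
  · exact DifferentiableOn.fun_sum fun i _ => (differentiableOn_const _).mul (hdh i)
  · exact DifferentiableOn.fun_sum fun i _ => (differentiableOn_const _).mul (hdg i)
  · simp only [(fun i => (hf i).2.2.1 : ∀ i, h i 0 = 0), mul_zero, Finset.sum_const_zero]
  · simp only [(fun i => (hf i).2.2.2.1 : ∀ i, g i 0 = 0), mul_zero, Finset.sum_const_zero]
  · rw [hDh 0 hmem0]
    simp only [(fun i => (hf i).2.2.2.2.1 : ∀ i, deriv (h i) 0 = 1), mul_one]
    rw [← Complex.ofReal_sum, htsum, Complex.ofReal_one]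
  · rw [hDg 0 hmem0]
    simp only [(fun i => (hf i).2.2.2.2.2.1 : ∀ i, deriv (g i) 0 = 0), mul_zero,
      Finset.sum_const_zero]
  · intro z hz
    rw [hDh z hz, hDg z hz, hD2h z hz, hD2g z hz]
    set u : Fin n → ℂ := fun i => (1 - α) * deriv (h i) z + α * z * deriv (deriv (h i)) z with hu
    set v : Fin n → ℂ := fun i => (1 - α) * deriv (g i) z + α * z * deriv (deriv (g i)) z with hv
    have hkey : ∀ i, (u i).re > -M + ‖v i‖ := fun i => (hf i).2.2.2.2.2.2 z hz
    have hcombh : ((1 - α):ℂ) * (∑ i, (t i:ℂ) * deriv (h i) z)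
        + (α:ℂ) * z * (∑ i, (t i:ℂ) * deriv (deriv (h i)) z) = ∑ i, (t i:ℂ) * u i := by
      rw [Finset.mul_sum, Finset.mul_sum, ← Finset.sum_add_distrib]
      exact Finset.sum_congr rfl fun i _ => by simp only [hu]; ring
    have hcombg : ((1 - α):ℂ) * (∑ i, (t i:ℂ) * deriv (g i) z)
        + (α:ℂ) * z * (∑ i, (t i:ℂ) * deriv (deriv (g i)) z) = ∑ i, (t i:ℂ) * v i := by
      rw [Finset.mul_sum, Finset.mul_sum, ← Finset.sum_add_distrib]
      exact Finset.sum_congr rfl fun i _ => by simp only [hv]; ring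
    push_cast at hcombh hcombg
    rw [hcombh, hcombg]
    have hre : (∑ i, (t i:ℂ) * u i).re = ∑ i, t i * (u i).re := by
      rw [Complex.re_sum]
      exact Finset.sum_congr rfl fun i _ => by
        simp [Complex.mul_re]
    rw [hre]
    have htri : ‖∑ i, (t i:ℂ) * v i‖ ≤ ∑ i, t i * ‖v i‖ := by
      refine le_trans (norm_sum_le _ _) (le_of_eq ?_)
      exact Finset.sum_congr rfl fun i _ => by
        simp [norm_mul, Complex.norm_real, Real.norm_eq_abs, _root_.abs_of_nonneg (ht0 i)]
    have hstep1 : -M + ‖∑ i, (t i:ℂ) * v i‖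
        ≤ ∑ i, t i * (-M + ‖v i‖) := by
      have heq : ∑ i, t i * (-M + ‖v i‖)
          = -M + ∑ i, t i * ‖v i‖ := by
        calc ∑ i, t i * (-M + ‖v i‖)
            = ∑ i, (t i * (-M) + t i * ‖v i‖) := by
              exact Finset.sum_congr rfl fun i _ => by ring
          _ = (∑ i, t i) * (-M) + ∑ i, t i * ‖v i‖ := by
              rw [Finset.sum_add_distrib, ← Finset.sum_mul]
          _ = -M + ∑ i, t i * ‖v i‖ := by rw [htsum]; ring
      linarith [htri]
    have hexists : ∃ j, 0 < t j := by
      by_contra hc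
      push_neg at hc
      have : ∑ i, t i = 0 := Finset.sum_eq_zero fun i _ => le_antisymm (hc i) (ht0 i)
      rw [this] at htsum; norm_num at htsum
    obtain ⟨j, hj⟩ := hexists
    have hstep2 : ∑ i, t i * (-M + ‖v i‖) < ∑ i, t i * (u i).re := by
      apply Finset.sum_lt_sum
      · intro i _
        exact mul_le_mul_of_nonneg_left (le_of_lt (hkey i)) (ht0 i)
      · exact ⟨j, Finset.mem_univ j, by exact mul_lt_mul_of_pos_left (hkey j) hj⟩
    linarith
end
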